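/- The polynomial p(x,y) = x^19 + (19/2)x^17y + (323/11)x^15y^2 + (323/11)x^13y^3 + (323/55)x^6y + (323/11)x^3y^13 + (323/11)x^2y^15 + (19/2)xy^17 + (323/55)xy^6 + (399/110)xy + y^19 is symmetric: p(x,y) = p(y,x), and satisfies p(x, 1-x) = 1 as a polynomial identity over ℚ. -/

import Mathlib

open MvPolynomial

noncomputable def p9 : MvPolynomial (Fin 2) ℚ :=
  X 0 ^ 19 + C (19/2) * X 0 ^ 17 * X 1 + C (323/11) * X 0 ^ 15 * X 1 ^ 2
    + C (323/11) * X 0 ^ 13 * X 1 ^ 3 + C (323/55) * X 0 ^ 6 * X 1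
    + C (323/11) * X 0 ^ 3 * X 1 ^ 13 + C (323/11) * X 0 ^ 2 * X 1 ^ 15
    + C (19/2) * X 0 * X 1 ^ 17 + C (323/55) * X 0 * X 1 ^ 6
    + C (399/110) * X 0 * X 1 + X 1 ^ 19

theorem rename_swap_p9 : rename (Equiv.swap (0 : Fin 2) 1) p9 = p9 := by
  simp only [p9, map_add, map_mul, map_pow, rename_C, rename_X,
    Equiv.swap_apply_left, Equiv.swap_apply_right]
  ring

theorem eval_p9_of_add_eq_one {x y : ℚ} (h : x + y = 1) : eval ![x, y] p9 = 1 := by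
  obtain rfl : y = 1 - x := by linarith
  simp only [p9, eval_add, eval_mul, eval_pow, eval_C, eval_X,
    Matrix.cons_val_zero, Matrix.cons_val_one]
  ring

theorem stmt_9 :
    rename (Equiv.swap (0 : Fin 2) 1) p9 = p9 ∧
    (∀ x y : ℚ, x + y = 1 → eval ![x, y] p9 = 1) :=
  ⟨rename_swap_p9, fun _ _ => eval_p9_of_add_eq_one⟩
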